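/- arXiv:1901.02316 — 13 statements merged into one kernel-verified Lean document; each statement's English description precedes it below -/
import Mathlib

section
/- Consider a commutative diagram of R-modules with exact rows: 0 → A →f B →g C → 0 and 0 → A' →f' B' →g' C' → 0, with vertical maps α: A → A', β: B → B', γ: C → C'. Then there exists a homomorphism h: B → A' with h∘f = α if and only if there exists a homomorphism h': C → B' with g'∘h' = γ. Moreover, in this case β = f'∘h + h'∘g. -/
open CategoryTheory

universe u

section Defs
variable (R : Type u) [CommRing R]

/-- `J` is a Glaz–Vasconcelos ideal (GV-ideal): finitely generated and the natural map
`R → Hom_R(J, R)`, `r ↦ (x ↦ r•x)`, is an isomorphism. -/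
def IsGVIdeal (J : Ideal R) : Prop :=
  J.FG ∧ Function.Bijective fun r : R =>
    ((LinearMap.lsmul R R r).comp J.subtype : J →ₗ[R] R)

variable (M : Type u) [AddCommGroup M] [Module R M]

/-- `M` is GV-torsion: every element is killed by some GV-ideal. -/
def IsGVTorsion : Prop :=
  ∀ x : M, ∃ J : Ideal R, IsGVIdeal R J ∧ ∀ a ∈ J, a • x = 0

/-- `M` is GV-torsionfree: no nonzero element is killed by a GV-ideal. -/
def IsGVTorsionFree : Prop :=
  ∀ x : M, (∃ J : Ideal R, IsGVIdeal R J ∧ ∀ a ∈ J, a • x = 0) → x = 0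

/-- The w-splitting condition on the epimorphism `g` of a short exact sequence:
there are a GV-ideal `⟨d₁,…,dₙ⟩` and maps `hₖ` with `g ∘ hₖ = (dₖ•·)`. -/
def IsWSplitSeq {B C : Type u} [AddCommGroup B] [Module R B] [AddCommGroup C] [Module R C]
    (g : B →ₗ[R] C) : Prop :=
  ∃ (n : ℕ) (d : Fin n → R), IsGVIdeal R (Ideal.span (Set.range d)) ∧
    ∃ h : Fin n → (C →ₗ[R] B), ∀ k, ∀ c : C, g (h k c) = d k • c

/-- `M` is a w-split module: some short exact sequence `0 → K → P → M → 0` with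
`P` projective is w-split. -/
def IsWSplitModule : Prop :=
  ∃ (P : Type u) (_ : AddCommGroup P) (_ : Module R P), Module.Projective R P ∧
    ∃ g : P →ₗ[R] M, Function.Surjective g ∧ IsWSplitSeq R g

/-- The Ext group `Ext^n_R(M, N)` as an object of `ModuleCat R`. -/
noncomputable def extMod (n : ℕ) (N : Type u) [AddCommGroup N] [Module R N] : ModuleCat.{u} R :=
  ((Ext R (ModuleCat.{u} R) n).obj (Opposite.op (ModuleCat.of R M))).obj (ModuleCat.of R N)

/-- `M` is a w-module: GV-torsionfree and `Ext¹_R(R/J, M) = 0` for all GV-ideals `J`. -/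
def IsWModule : Prop :=
  IsGVTorsionFree R M ∧
    ∀ J : Ideal R, IsGVIdeal R J → Subsingleton (extMod R (R ⧸ J) 1 M)

/-- `ι : M →ₗ E` exhibits `E` as a w-envelope `M_w` of the GV-torsionfree module `M`:
`E` is a w-module containing `M` with GV-torsion quotient `E/M`. -/
def IsWEnvelope (E : Type u) [AddCommGroup E] [Module R E] (ι : M →ₗ[R] E) : Prop :=
  Function.Injective ι ∧ IsWModule R E ∧ IsGVTorsion R (E ⧸ LinearMap.range ι)

/-- `M` is w-projective: `Ext¹_R(L(M), N)` is GV-torsion for every GV-torsionfree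
w-module `N`, where `L(M) = (M/tor_GV(M))_w`. -/
def IsWProjective : Prop :=
  ∀ (T : Submodule R M),
    (∀ x : M, x ∈ T ↔ ∃ J : Ideal R, IsGVIdeal R J ∧ ∀ a ∈ J, a • x = 0) →
    ∀ (L : Type u) (_ : AddCommGroup L) (_ : Module R L) (ι : (M ⧸ T) →ₗ[R] L),
      IsWEnvelope R (M ⧸ T) L ι →
      ∀ (N : Type u) (_ : AddCommGroup N) (_ : Module R N),
        IsGVTorsionFree R N → IsWModule R N → IsGVTorsion R (extMod R L 1 N)

/-- `I` is a w-ideal: `I_w = I`, i.e. any `x` with `Jx ⊆ I` for some GV-ideal `J`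
already lies in `I`. -/
def IsWIdeal (I : Ideal R) : Prop :=
  ∀ x : R, (∃ J : Ideal R, IsGVIdeal R J ∧ ∀ a ∈ J, a * x ∈ I) → x ∈ I

/-- `I` is a maximal w-ideal: maximal among proper w-ideals of `R`. -/
def IsMaximalWIdeal (I : Ideal R) : Prop :=
  I ≠ ⊤ ∧ IsWIdeal R I ∧ ∀ I' : Ideal R, IsWIdeal R I' → I' ≠ ⊤ → I ≤ I' → I = I'

end Defs


/-- A commutative diagram with exact rows `0 → A → B → C → 0`, `0 → A' → B' → C' → 0`:
`h : B → A'` with `h∘f = α` exists iff `h' : C → B'` with `g'∘h' = γ` exists; and in this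
case they can be chosen with `β = f'∘h + h'∘g`. -/
theorem stmt0 {R : Type u} [CommRing R]
    {A B C A' B' C' : Type u}
    [AddCommGroup A] [Module R A] [AddCommGroup B] [Module R B] [AddCommGroup C] [Module R C]
    [AddCommGroup A'] [Module R A'] [AddCommGroup B'] [Module R B'] [AddCommGroup C'] [Module R C']
    (f : A →ₗ[R] B) (g : B →ₗ[R] C) (f' : A' →ₗ[R] B') (g' : B' →ₗ[R] C')
    (hf : Function.Injective f) (hg : Function.Surjective g)
    (hfg : LinearMap.range f = LinearMap.ker g)
    (hf' : Function.Injective f') (hg' : Function.Surjective g')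
    (hfg' : LinearMap.range f' = LinearMap.ker g')
    (α : A →ₗ[R] A') (β : B →ₗ[R] B') (γ : C →ₗ[R] C')
    (hsq1 : β ∘ₗ f = f' ∘ₗ α) (hsq2 : γ ∘ₗ g = g' ∘ₗ β) :
    ((∃ h : B →ₗ[R] A', h ∘ₗ f = α) ↔ (∃ h' : C →ₗ[R] B', g' ∘ₗ h' = γ)) ∧
    ((∃ h : B →ₗ[R] A', h ∘ₗ f = α) →
      ∃ (h : B →ₗ[R] A') (h' : C →ₗ[R] B'),
        h ∘ₗ f = α ∧ g' ∘ₗ h' = γ ∧ β = f' ∘ₗ h + h' ∘ₗ g) := by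
  -- Forward construction: from h build h' with all the properties.
  have fwd : (∃ h : B →ₗ[R] A', h ∘ₗ f = α) →
      ∃ (h : B →ₗ[R] A') (h' : C →ₗ[R] B'),
        h ∘ₗ f = α ∧ g' ∘ₗ h' = γ ∧ β = f' ∘ₗ h + h' ∘ₗ g := by
    rintro ⟨h, hh⟩
    set φ : B →ₗ[R] B' := β - f' ∘ₗ h with hφ
    have hker : LinearMap.ker g ≤ LinearMap.ker φ := by
      intro b hb
      rw [← hfg] at hb
      obtain ⟨a, rfl⟩ := hb
      have h1 : β (f a) = f' (α a) := LinearMap.congr_fun hsq1 a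
      have h2 : h (f a) = α a := LinearMap.congr_fun hh a
      simp [hφ, h1, h2]
    set e := g.quotKerEquivOfSurjective hg with he
    set h' : C →ₗ[R] B' :=
      ((LinearMap.ker g).liftQ φ hker) ∘ₗ (e.symm : C →ₗ[R] B ⧸ LinearMap.ker g) with hh'
    have hcomp : h' ∘ₗ g = φ := by
      ext b
      have hmk : e (Submodule.Quotient.mk b) = g b := by
        simp [he, LinearMap.quotKerEquivOfSurjective, LinearMap.quotKerEquivRange]
      have : e.symm (g b) = Submodule.Quotient.mk b := by
        rw [← hmk, LinearEquiv.symm_apply_apply]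
      simp [hh', this]
    refine ⟨h, h', hh, ?_, ?_⟩
    · ext c
      obtain ⟨b, rfl⟩ := hg c
      have h3 : h' (g b) = φ b := LinearMap.congr_fun hcomp b
      have h4 : γ (g b) = g' (β b) := LinearMap.congr_fun hsq2 b
      have h5 : g' (f' (h b)) = 0 := by
        have : f' (h b) ∈ LinearMap.ker g' := hfg' ▸ LinearMap.mem_range_self f' (h b)
        exact this
      simp [h3, hφ, h4, h5]
    · have : h' ∘ₗ g = β - f' ∘ₗ h := hcomp
      rw [this]; abel
  constructor
  · constructor
    · intro hex
      obtain ⟨_, h', _, hh', _⟩ := fwd hex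
      exact ⟨h', hh'⟩
    · rintro ⟨h', hh'⟩
      set ψ : B →ₗ[R] B' := β - h' ∘ₗ g with hψ
      have hmem : ∀ b, ψ b ∈ LinearMap.range f' := by
        intro b
        rw [hfg']
        have h4 : γ (g b) = g' (β b) := LinearMap.congr_fun hsq2 b
        have h5 : g' (h' (g b)) = γ (g b) := LinearMap.congr_fun hh' (g b)
        simp [hψ, LinearMap.mem_ker, h5, h4]
      set eq := LinearEquiv.ofInjective f' hf' with heq
      refine ⟨(eq.symm : LinearMap.range f' →ₗ[R] A') ∘ₗ
        (ψ.codRestrict (LinearMap.range f') hmem), ?_⟩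
      ext a
      apply hf'
      have key : ∀ x : LinearMap.range f', f' (eq.symm x) = x := by
        intro x
        have := eq.apply_symm_apply x
        rw [← this]
        simp [heq]
      have h1 : β (f a) = f' (α a) := LinearMap.congr_fun hsq1 a
      have h2 : g (f a) = 0 := by
        have : f a ∈ LinearMap.ker g := hfg ▸ LinearMap.mem_range_self f a
        exact this
      rw [LinearMap.comp_apply, LinearMap.comp_apply, LinearEquiv.coe_coe, key, LinearMap.codRestrict_apply]
      simp [hψ, h1, h2]
  · exact fwd
end

section
/- A short exact sequence 0 → A →f B →g C → 0 of R-modules is w-split if and only if there exist a GV-ideal J = ⟨d₁,…,dₙ⟩ of R and homomorphisms q₁,…,qₙ: B → A such that qₖ∘f equals multiplication by dₖ on A for all k = 1,…,n. -/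
open CategoryTheory

universe u

/-- A short exact sequence `0 → A → B → C → 0` is w-split iff there are a GV-ideal
`⟨d₁,…,dₙ⟩` and maps `qₖ : B → A` with `qₖ∘f = (dₖ•·)` on `A`. -/
theorem stmt1 {R : Type u} [CommRing R] {A B C : Type u}
    [AddCommGroup A] [Module R A] [AddCommGroup B] [Module R B] [AddCommGroup C] [Module R C]
    (f : A →ₗ[R] B) (g : B →ₗ[R] C)
    (hf : Function.Injective f) (hg : Function.Surjective g)
    (hfg : LinearMap.range f = LinearMap.ker g) :
    IsWSplitSeq R g ↔
      ∃ (n : ℕ) (d : Fin n → R), IsGVIdeal R (Ideal.span (Set.range d)) ∧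
        ∃ q : Fin n → (B →ₗ[R] A), ∀ k, ∀ a : A, q k (f a) = d k • a := by
  constructor
  · rintro ⟨n, d, hJ, h, hh⟩
    refine ⟨n, d, hJ, ?_⟩
    -- For each k, b ↦ d k • b - h k (g b) lands in ker g = range f
    have key : ∀ k : Fin n, ∀ b : B,
        (d k • b - h k (g b)) ∈ LinearMap.range f := by
      intro k b
      rw [hfg, LinearMap.mem_ker, map_sub, map_smul, hh, sub_self]
    let e := LinearEquiv.ofInjective f hf
    refine ⟨fun k => e.symm.toLinearMap.comp
      (LinearMap.codRestrict (LinearMap.range f)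
        (d k • LinearMap.id - (h k).comp g) (fun b => key k b)), ?_⟩
    intro k a
    apply e.injective
    simp only [LinearMap.comp_apply, LinearEquiv.coe_coe, LinearEquiv.apply_symm_apply]
    apply Subtype.ext
    simp only [LinearMap.codRestrict_apply, LinearMap.sub_apply, LinearMap.smul_apply,
      LinearMap.id_apply, LinearMap.comp_apply]
    have : g (f a) = 0 := by
      rw [← LinearMap.mem_ker, ← hfg]; exact ⟨a, rfl⟩
    rw [this, map_zero, sub_zero]
    have : (e (d k • a) : B) = f (d k • a) := rfl
    rw [this, map_smul]
  · rintro ⟨n, d, hJ, q, hq⟩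
    refine ⟨n, d, hJ, ?_⟩
    have hker : ∀ k : Fin n, LinearMap.ker g ≤
        LinearMap.ker (d k • LinearMap.id - f.comp (q k)) := by
      intro k b hb
      rw [← hfg] at hb
      obtain ⟨a, rfl⟩ := hb
      simp only [LinearMap.mem_ker, LinearMap.sub_apply, LinearMap.smul_apply,
        LinearMap.id_apply, LinearMap.comp_apply, hq, map_smul, sub_self]
    let eq := g.quotKerEquivOfSurjective hg
    refine ⟨fun k => ((LinearMap.ker g).liftQ _ (hker k)).comp eq.symm.toLinearMap, ?_⟩
    intro k c
    obtain ⟨b, rfl⟩ := hg c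
    have hb : eq.symm (g b) = Submodule.Quotient.mk b := by
      apply eq.injective
      rw [LinearEquiv.apply_symm_apply]
      rfl
    simp only [LinearMap.comp_apply, LinearEquiv.coe_coe, hb, Submodule.liftQ_apply,
      LinearMap.sub_apply, LinearMap.smul_apply, LinearMap.id_apply, map_sub, map_smul]
    have : g (f (q k b)) = 0 := by
      rw [← LinearMap.mem_ker, ← hfg]; exact ⟨q k b, rfl⟩
    rw [this, sub_zero]
end

section
/- Let M be a GV-torsion R-module. Then M is w-split if and only if there exists a GV-ideal J of R with JM = 0. -/
open CategoryTheory

universe u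

lemma gv_ann_zero {R : Type u} [CommRing R] {J : Ideal R} (hJ : IsGVIdeal R J)
    {r : R} (hr : ∀ a ∈ J, a * r = 0) : r = 0 := by
  have hinj := hJ.2.injective
  have : ((LinearMap.lsmul R R r).comp J.subtype : J →ₗ[R] R)
      = ((LinearMap.lsmul R R 0).comp J.subtype : J →ₗ[R] R) := by
    ext ⟨a, ha⟩
    simp only [LinearMap.comp_apply, Submodule.subtype_apply, LinearMap.lsmul_apply,
      smul_eq_mul, zero_mul]
    rw [mul_comm]
    exact hr a ha
  exact hinj this

/-- A GV-torsion module `M` is w-split iff `JM = 0` for some GV-ideal `J`. -/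
theorem stmt2 {R : Type u} [CommRing R] {M : Type u} [AddCommGroup M] [Module R M]
    (hM : IsGVTorsion R M) :
    IsWSplitModule R M ↔ ∃ J : Ideal R, IsGVIdeal R J ∧ ∀ a ∈ J, ∀ x : M, a • x = 0 := by
  constructor
  · rintro ⟨P, _, _, hP, g, hg, n, d, hGV, h, hh⟩
    obtain ⟨s, hs⟩ := Module.projective_def.mp hP
    refine ⟨Ideal.span (Set.range d), hGV, ?_⟩
    have key : ∀ (k : Fin n) (x : M), d k • x = 0 := by
      intro k x
      obtain ⟨J', hJ', hann⟩ := hM x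
      have hsz : s (h k x) = 0 := by
        ext i
        refine gv_ann_zero hJ' (fun a ha => ?_)
        have h1 : a • h k x = 0 := by
          rw [← map_smul, hann a ha, map_zero]
        have h2 : a • s (h k x) = 0 := by
          rw [← map_smul, h1, map_zero]
        calc a * (s (h k x)) i = (a • s (h k x)) i := by simp
          _ = 0 := by rw [h2]; rfl
      have hz : h k x = 0 := by
        have := hs (h k x)
        rw [hsz, map_zero] at this
        exact this.symm
      rw [← hh k x, hz, map_zero]
    intro a ha x
    induction ha using Submodule.span_induction with
    | mem a hmem => obtain ⟨k, rfl⟩ := hmem; exact key k x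
    | zero => simp
    | add a b _ _ h1 h2 => rw [add_smul, h1, h2, add_zero]
    | smul r a _ h1 => rw [smul_eq_mul, mul_smul, h1, smul_zero]
  · rintro ⟨J, hJ, hann⟩
    obtain ⟨S, hS⟩ := hJ.1
    refine ⟨M →₀ R, inferInstance, inferInstance, inferInstance,
      Finsupp.linearCombination R (id : M → M), fun x => ⟨Finsupp.single x 1, by simp⟩, ?_⟩
    refine ⟨S.card, fun k => (S.equivFin.symm k : R), ?_, fun _ => 0, ?_⟩
    · have hrange : Set.range (fun k => ((S.equivFin.symm k : S) : R)) = (S : Set R) := by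
        ext a
        constructor
        · rintro ⟨k, rfl⟩; exact Finset.coe_mem _
        · intro haS
          exact ⟨S.equivFin ⟨a, haS⟩, by simp⟩
      rw [hrange, hS]
      exact hJ
    · intro k c
      have hmem : ((S.equivFin.symm k : S) : R) ∈ J := by
        rw [← hS]
        exact Ideal.subset_span (Finset.coe_mem _)
      simp [hann _ hmem c]
end

section
/- An R-module M is w-split if and only if Ext¹_R(M,N) is GV-torsion for every R-module N. -/
open CategoryTheory

universe u

/-!
`Ext¹(M, N)` is computed from a projective presentation `0 → K → P →g M → 0` as `Hom(K, N)`
modulo restrictions of maps `P → N`. If `g ∘ h = d • id_M`, then `d • id_P - h ∘ g` maps `P`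
into `K` and restricts to `d • id_K`, so `d` kills every class. Conversely, if `d` kills the
class of `id_K`, i.e. `d • id_K` extends to `φ : P → K`, then `d • id_P - φ` vanishes on `K` and
descends to `h : M → P` with `g ∘ h = d • id_M`. Lifting through projectives moves a w-splitting
from one projective presentation to any other.
-/

open LinearMap

namespace CategoryTheory.ShortComplex

variable {R : Type*} [Ring R] (S : ShortComplex (ModuleCat R))

noncomputable def moduleCatHomologyEquivOfExact {L : Type*} [AddCommGroup L] [Module R L]
    (j : L →ₗ[R] S.X₂) (hj : Function.Injective j) (hjg : Function.Exact j S.g.hom)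
    (q : S.X₁ →ₗ[R] L) (hq : j ∘ₗ q = S.f.hom) :
    S.homology ≃ₗ[R] L ⧸ range q :=
  let e : L ≃ₗ[R] ker S.g.hom :=
    (LinearEquiv.ofInjective j hj).trans (LinearEquiv.ofEq _ _ hjg.linearMap_ker_eq.symm)
  S.moduleCatHomologyIso.toLinearEquiv.trans <| (Submodule.Quotient.equiv _ _ e <| by
    rw [← range_comp]
    congr 1
    ext x
    exact congr($hq x)).symm

end CategoryTheory.ShortComplex

namespace CategoryTheory.ProjectiveResolution

variable {R : Type u} [CommRing R] {M : Type u} [AddCommGroup M] [Module R M]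
  (P : ProjectiveResolution (ModuleCat.of R M))

noncomputable def toKerπ : P.complex.X 1 →ₗ[R] ker (P.π.f 0).hom :=
  (P.complex.d 1 0).hom.codRestrict _ fun x => congr($(P.complex_d_comp_π_f_zero) x)

lemma toKerπ_surjective : Function.Surjective P.toKerπ := by
  rintro ⟨y, hy⟩
  rw [← P.exact₀.moduleCat_range_eq_ker] at hy
  obtain ⟨x, rfl⟩ := hy
  exact ⟨x, rfl⟩

lemma exact_d_toKerπ : Function.Exact (P.complex.d 2 1).hom P.toKerπ := by
  rw [LinearMap.exact_iff, toKerπ, ker_codRestrict]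
  exact ((P.exact_succ 0).moduleCat_range_eq_ker).symm

variable (N : Type u) [AddCommGroup N] [Module R N]

noncomputable def extOneEquiv :
    extMod R M 1 N ≃ₗ[R]
      (ker (P.π.f 0).hom →ₗ[R] N) ⧸ range (lcomp R N (ker (P.π.f 0).hom).subtype) :=
  let S := (P.complex.linearYonedaObj R (ModuleCat.of R N)).sc' 0 1 2
  let homEquiv {X : ModuleCat R} : (X ⟶ ModuleCat.of R N) ≃ₗ[R] (X →ₗ[R] N) :=
    ModuleCat.homLinearEquiv
  let j : (ker (P.π.f 0).hom →ₗ[R] N) →ₗ[R] S.X₂ :=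
    homEquiv.symm.toLinearMap ∘ₗ lcomp R N P.toKerπ
  have hj : Function.Injective j :=
    homEquiv.symm.injective.comp (lcomp_injective_of_surjective _ P.toKerπ_surjective)
  have hjg : Function.Exact j S.g.hom :=
    Function.Exact.of_ladder_linearEquiv_of_exact (e₁ := LinearEquiv.refl _ _)
      (e₂ := homEquiv.symm) (e₃ := homEquiv.symm) rfl rfl
      (exact_lcomp_of_exact_of_surjective N P.exact_d_toKerπ P.toKerπ_surjective)
  ((P.isoExt 1 _ ≪≫ HomologicalComplex.homologyIsoSc' _ 0 1 2 (by simp) (by simp)).toLinearEquiv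
    ≪≫ₗ S.moduleCatHomologyEquivOfExact j hj hjg
      (lcomp R N (ker (P.π.f 0).hom).subtype ∘ₗ homEquiv.toLinearMap) rfl)
    ≪≫ₗ Submodule.quotEquivOfEq _ _ (range_comp_of_range_eq_top _ homEquiv.range)

end CategoryTheory.ProjectiveResolution

section Presentation

variable {R : Type u} [CommRing R]

lemma IsGVTorsion.of_linearEquiv {A B : Type u} [AddCommGroup A] [Module R A]
    [AddCommGroup B] [Module R B] (h : IsGVTorsion R A) (e : A ≃ₗ[R] B) : IsGVTorsion R B := by
  intro x
  obtain ⟨J, hJ, hx⟩ := h (e.symm x)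
  exact ⟨J, hJ, fun a ha => by simpa using congr(e $(hx a ha))⟩

variable {P M : Type u} [AddCommGroup P] [Module R P] [AddCommGroup M] [Module R M]
  {g : P →ₗ[R] M}

lemma IsWSplitSeq.of_surjective [Module.Projective R P] (hg : IsWSplitSeq R g)
    {Q : Type u} [AddCommGroup Q] [Module R Q] {π : Q →ₗ[R] M} (hπ : Function.Surjective π) :
    IsWSplitSeq R π := by
  obtain ⟨n, d, hd, h, hgh⟩ := hg
  obtain ⟨ℓ, hℓ⟩ := Module.projective_lifting_property π g hπ
  exact ⟨n, d, hd, fun k => ℓ ∘ₗ h k, fun k c => by simp [← hgh k c, ← hℓ]⟩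

lemma exists_comp_subtype_eq_smul {a : R} {h : M →ₗ[R] P} (hgh : ∀ c, g (h c) = a • c)
    {N : Type*} [AddCommGroup N] [Module R N] (v : ker g →ₗ[R] N) :
    ∃ w : P →ₗ[R] N, w ∘ₗ (ker g).subtype = a • v := by
  let θ : P →ₗ[R] ker g :=
    (a • LinearMap.id - h ∘ₗ g).codRestrict _ fun y => by simp [hgh]
  refine ⟨v ∘ₗ θ, LinearMap.ext fun y => ?_⟩
  have hθ : θ y = a • y := Subtype.ext <| by simp [θ, mem_ker.1 y.2]
  simp [hθ]

lemma exists_comp_eq_smul (hg : Function.Surjective g) {a : R} (φ : P →ₗ[R] ker g)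
    (hφ : φ ∘ₗ (ker g).subtype = a • LinearMap.id) :
    ∃ h : M →ₗ[R] P, g ∘ₗ h = a • LinearMap.id := by
  let ψ : P →ₗ[R] P := a • LinearMap.id - (ker g).subtype ∘ₗ φ
  have hψ : ψ ∘ₗ (ker g).subtype = 0 := LinearMap.ext fun y => by
    have hφy : φ y = a • y := congr($hφ y)
    simp [ψ, hφy]
  obtain ⟨h, hhg⟩ : ∃ h, h ∘ₗ g = ψ :=
    (exact_lcomp_of_exact_of_surjective P g.exact_subtype_ker_map hg ψ).1 hψ
  refine ⟨h, hg.injective_linearMapComp_right (LinearMap.ext fun y => ?_)⟩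
  simp [← LinearMap.comp_apply h g, hhg, ψ]

lemma IsWSplitSeq.isGVTorsion (hg : IsWSplitSeq R g) (N : Type u) [AddCommGroup N] [Module R N] :
    IsGVTorsion R ((ker g →ₗ[R] N) ⧸ range (lcomp R N (ker g).subtype)) := by
  obtain ⟨n, d, hd, h, hgh⟩ := hg
  have hann : Ideal.span (Set.range d) ≤
      Module.annihilator R ((ker g →ₗ[R] N) ⧸ range (lcomp R N (ker g).subtype)) := by
    refine Ideal.span_le.2 ?_
    rintro _ ⟨k, rfl⟩
    refine Module.mem_annihilator.2 ?_
    rintro ⟨v⟩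
    obtain ⟨w, hw⟩ := exists_comp_subtype_eq_smul (hgh k) v
    exact (Submodule.Quotient.mk_eq_zero _).2 ⟨w, hw⟩
  exact fun x => ⟨_, hd, fun a ha => Module.mem_annihilator.1 (hann ha) x⟩

lemma isWSplitSeq_of_isGVTorsion (hg : Function.Surjective g)
    (ht : IsGVTorsion R ((ker g →ₗ[R] ker g) ⧸ range (lcomp R (ker g) (ker g).subtype))) :
    IsWSplitSeq R g := by
  obtain ⟨J, hJ, hid⟩ := ht (Submodule.Quotient.mk LinearMap.id)
  obtain ⟨n, d, hd⟩ := Submodule.fg_iff_exists_fin_generating_family.1 hJ.1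
  have hsplit (k : Fin n) : ∃ h : M →ₗ[R] P, g ∘ₗ h = d k • LinearMap.id := by
    have hdk := hid (d k) (hd ▸ Ideal.subset_span ⟨k, rfl⟩)
    rw [← Submodule.Quotient.mk_smul, Submodule.Quotient.mk_eq_zero] at hdk
    obtain ⟨φ, hφ⟩ := hdk
    exact exists_comp_eq_smul hg φ hφ
  choose h hgh using hsplit
  exact ⟨n, d, by rwa [Ideal.span, hd], h, fun k c => congr($(hgh k) c)⟩

end Presentation

/-- `M` is w-split iff `Ext¹_R(M, N)` is GV-torsion for every `R`-module `N`. -/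
theorem stmt3 {R : Type u} [CommRing R] {M : Type u} [AddCommGroup M] [Module R M] :
    IsWSplitModule R M ↔
      ∀ (N : Type u) (_ : AddCommGroup N) (_ : Module R N),
        IsGVTorsion R (extMod R M 1 N) := by
  let P := projectiveResolution (ModuleCat.of R M)
  have hπ : Function.Surjective (P.π.f 0).hom := (ModuleCat.epi_iff_surjective _).1 inferInstance
  have : Module.Projective R (P.complex.X 0) := (IsProjective.iff_projective _).2 (P.projective 0)
  constructor
  · rintro ⟨Q, _, _, _, g, -, hg⟩ N _ _
    exact ((hg.of_surjective hπ).isGVTorsion N).of_linearEquiv (P.extOneEquiv N).symm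
  · intro hext
    exact ⟨_, _, _, this, _, hπ,
      isWSplitSeq_of_isGVTorsion hπ ((hext _ _ _).of_linearEquiv (P.extOneEquiv _))⟩
end

section
/- If an R-module M is w-split, then Ext^i_R(M,N) is GV-torsion for every R-module N and every integer i ≥ 1. -/
open CategoryTheory

universe u

/-!
Each relation `g ∘ hₖ = dₖ • id_M` factors multiplication by `dₖ` on `M` through the projective
module `P`. Since `Ext^i(-, N)` is `R`-linear and `Ext^i(P, N) = 0` for `i ≥ 1`, every `dₖ`
annihilates `Ext^i(M, N)`, and hence so does the GV-ideal `⟨d₁, …, dₙ⟩`.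
-/

open Opposite

namespace HomologicalComplex

variable {S : Type*} [Semiring S] {C : Type*} [Category* C] [Preadditive C] [Linear S C]
  {ι : Type*} {c : ComplexShape ι}

lemma homologyMap_smul {K L : HomologicalComplex C c} (φ : K ⟶ L) (r : S) (i : ι)
    [K.HasHomology i] [L.HasHomology i] :
    homologyMap (r • φ) i = r • homologyMap φ i :=
  ShortComplex.homologyMap_smul ((shortComplexFunctor C c i).map φ) r

end HomologicalComplex

section Ext

variable {R : Type*} [CommRing R] {C : Type*} [Category* C] [Abelian C] [Linear R C]
  [EnoughProjectives C]

/-- On a projective resolution `P` of `X`, `r • 𝟙 P` lifts `r • 𝟙 X` and acts on the complex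
`Hom(P, Y)` as the scalar `r`. -/
lemma Ext_map_smul_id_app (n : ℕ) (X Y : C) (r : R) :
    ((Ext R C n).map (r • 𝟙 X).op).app Y = r • 𝟙 _ := by
  let F := ((linearYoneda R C).obj Y).rightOp
  let P := ProjectiveResolution.of X
  let K := ((F.mapHomologicalComplex _).obj P.complex).unop
  have hF : (F.mapHomologicalComplex _).map (r • 𝟙 P.complex) =
      (HomologicalComplex.opFunctor _ _).map (r • 𝟙 K).op := by
    ext i : 2
    apply Quiver.Hom.unop_inj
    ext (ρ : P.complex.X i ⟶ Y)
    change (r • 𝟙 _) ≫ ρ = r • ρ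
    rw [Linear.smul_comp, Category.id_comp]
  have hH : HomologicalComplex.homologyMap ((F.mapHomologicalComplex _).map (r • 𝟙 P.complex)) n =
      (K.homologyOp n).hom ≫ (r • 𝟙 _).op ≫ (K.homologyOp n).inv := by
    have h := HomologicalComplex.homologyOp_hom_naturality (r • 𝟙 K) n
    rw [HomologicalComplex.homologyMap_smul, HomologicalComplex.homologyMap_id] at h
    rw [hF]
    exact ((Iso.eq_comp_inv _).2 h).trans (Category.assoc _ _ _)
  have hlift : (r • 𝟙 P.complex).f 0 ≫ P.π.f 0 = P.π.f 0 ≫ (r • 𝟙 X) := by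
    rw [HomologicalComplex.smul_f_apply, HomologicalComplex.id_f, Linear.smul_comp,
      Category.id_comp]
    exact ((Linear.comp_smul _ _ _ (P.π.f 0 : P.complex.X 0 ⟶ X) r (𝟙 X)).trans
      (congrArg (r • ·) (Category.comp_id _))).symm
  have h := P.isoLeftDerivedObj_hom_naturality (r • 𝟙 X) P (r • 𝟙 P.complex) hlift F n
  rw [Functor.comp_map, HomologicalComplex.homologyFunctor_map, hH, ← Iso.eq_comp_inv] at h
  let T := (K.homologyOp n).unop ≪≫ (P.isoLeftDerivedObj F n).unop
  change ((F.leftDerived n).map (r • 𝟙 X)).unop = _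
  rw [h]
  change T.inv ≫ (r • 𝟙 _) ≫ T.hom = _
  simp only [Linear.smul_comp, Linear.comp_smul, Category.id_comp, Iso.inv_hom_id]
  rfl

lemma Ext_succ_smul_eq_zero_of_comp_eq_smul_id {X P : C} [Projective P] (a : X ⟶ P)
    (b : P ⟶ X) {r : R} (hab : a ≫ b = r • 𝟙 X) (n : ℕ) (Y : C)
    (x : ((Ext R C (n + 1)).obj (op X)).obj Y) : r • x = 0 := by
  have hzero : ((Ext R C (n + 1)).map b.op).app Y = 0 :=
    (isZero_Ext_succ_of_projective P Y n).eq_of_tgt _ _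
  have hx : r • x = ((Ext R C (n + 1)).map (r • 𝟙 X).op).app Y x := by
    rw [Ext_map_smul_id_app]
    rfl
  rw [hx, ← hab, op_comp, Functor.map_comp, NatTrans.comp_app, hzero, Limits.zero_comp]
  rfl

end Ext

/-- If `M` is w-split then `Ext^i_R(M, N)` is GV-torsion for all `N` and all `i ≥ 1`. -/
theorem stmt4 {R : Type u} [CommRing R] {M : Type u} [AddCommGroup M] [Module R M]
    (hM : IsWSplitModule R M) :
    ∀ (N : Type u) (_ : AddCommGroup N) (_ : Module R N) (i : ℕ), 1 ≤ i →
      IsGVTorsion R (extMod R M i N) := by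
  obtain ⟨P, _, _, hP, g, -, n, d, hGV, h, hgh⟩ := hM
  have : Projective (ModuleCat.of R P) := (IsProjective.iff_projective P).mp hP
  intro N _ _ i hi x
  obtain ⟨i, rfl⟩ := Nat.exists_eq_add_of_le' hi
  have hd : ∀ k, d k ∈ Ideal.torsionOf R _ x := fun k =>
    Ext_succ_smul_eq_zero_of_comp_eq_smul_id (ModuleCat.ofHom (h k)) (ModuleCat.ofHom g)
      (by ext c; exact hgh k c) i _ x
  exact ⟨_, hGV, fun a ha => Ideal.span_le.2 (Set.range_subset_iff.2 hd) ha⟩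
end

section
/- An R-module M is w-split if and only if for every epimorphism g: B → C of R-modules, the cokernel of the induced map g_*: Hom_R(M,B) → Hom_R(M,C) is GV-torsion. -/
open CategoryTheory

universe u

/-! The cokernel of `g_*` is GV-torsion exactly when every `φ : M → C` has a GV-ideal `J`
with `J • φ ⊆ im g_*`; applied to `g = g₀ : P → M` and `φ = id`, this is the w-splitting of
`g₀`. For a projective `P`, lifting `φ ∘ g₀` through `g` transports `a • id ∈ im (g₀)_*` to
`a • φ ∈ im g_*`, and a w-split module is recovered from the free presentation
`(M →₀ R) → M`. -/

section WSplit

variable {R : Type u} [CommRing R]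

open Submodule

theorem isGVTorsion_quotient_iff {N : Type u} [AddCommGroup N] [Module R N]
    (L : Submodule R N) :
    IsGVTorsion R (N ⧸ L) ↔ ∀ x : N, ∃ J : Ideal R, IsGVIdeal R J ∧ J ≤ L.colon {x} := by
  simp only [IsGVTorsion, (Submodule.Quotient.mk_surjective L).forall,
    ← Submodule.Quotient.mk_smul, Submodule.Quotient.mk_eq_zero, SetLike.le_def,
    mem_colon_singleton]

theorem smul_id_mem_range_compRight_iff {B C : Type u} [AddCommGroup B] [Module R B]
    [AddCommGroup C] [Module R C] (g : B →ₗ[R] C) (a : R) :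
    a • LinearMap.id ∈ LinearMap.range (LinearMap.compRight (M := C) R g) ↔
      ∃ h : C →ₗ[R] B, ∀ c, g (h c) = a • c := by
  simp only [LinearMap.mem_range, LinearMap.compRight_apply, LinearMap.ext_iff,
    LinearMap.comp_apply, LinearMap.smul_apply, LinearMap.id_apply]

theorem isWSplitSeq_iff {B C : Type u} [AddCommGroup B] [Module R B]
    [AddCommGroup C] [Module R C] (g : B →ₗ[R] C) :
    IsWSplitSeq R g ↔ ∃ J : Ideal R, IsGVIdeal R J ∧
      J ≤ (LinearMap.range (LinearMap.compRight (M := C) R g)).colon {LinearMap.id} := by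
  constructor
  · rintro ⟨n, d, hJ, h, hh⟩
    refine ⟨_, hJ, Ideal.span_le.2 <| Set.range_subset_iff.2 fun k => ?_⟩
    exact mem_colon_singleton.2 <| (smul_id_mem_range_compRight_iff g _).2 ⟨h k, hh k⟩
  · rintro ⟨J, hJ, hle⟩
    obtain ⟨n, d, rfl⟩ := fg_iff_exists_fin_generating_family.1 hJ.1
    have hd : ∀ k, ∃ h : C →ₗ[R] B, ∀ c, g (h c) = d k • c := fun k =>
      (smul_id_mem_range_compRight_iff g _).1 <| mem_colon_singleton.1 <|
        hle <| Ideal.subset_span ⟨k, rfl⟩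
    choose h hh using hd
    exact ⟨n, d, hJ, h, hh⟩

theorem colon_id_range_compRight_le_of_projective {P M B C : Type u}
    [AddCommGroup P] [Module R P] [Module.Projective R P] [AddCommGroup M] [Module R M]
    [AddCommGroup B] [Module R B] [AddCommGroup C] [Module R C]
    (g₀ : P →ₗ[R] M) (g : B →ₗ[R] C) (hg : Function.Surjective g) (φ : M →ₗ[R] C) :
    (LinearMap.range (LinearMap.compRight (M := M) R g₀)).colon {LinearMap.id} ≤
      (LinearMap.range (LinearMap.compRight (M := M) R g)).colon {φ} := by
  intro a ha
  obtain ⟨h, hh⟩ := (smul_id_mem_range_compRight_iff g₀ a).1 (mem_colon_singleton.1 ha)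
  obtain ⟨ψ, hψ⟩ := Module.projective_lifting_property g (φ ∘ₗ g₀) hg
  refine mem_colon_singleton.2 ⟨ψ ∘ₗ h, LinearMap.ext fun m => ?_⟩
  calc g (ψ (h m)) = φ (g₀ (h m)) := LinearMap.congr_fun hψ (h m)
    _ = a • φ m := by rw [hh, map_smul]

end WSplit

/-- `M` is w-split iff for every epimorphism `g : B → C` the cokernel of
`g_* : Hom_R(M,B) → Hom_R(M,C)` is GV-torsion. -/
theorem stmt5 {R : Type u} [CommRing R] {M : Type u} [AddCommGroup M] [Module R M] :
    IsWSplitModule R M ↔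
      ∀ (B C : Type u) (_ : AddCommGroup B) (_ : Module R B) (_ : AddCommGroup C)
        (_ : Module R C) (g : B →ₗ[R] C), Function.Surjective g →
        IsGVTorsion R
          ((M →ₗ[R] C) ⧸ LinearMap.range ((LinearMap.llcomp R M B C :
              (B →ₗ[R] C) →ₗ[R] (M →ₗ[R] B) →ₗ[R] M →ₗ[R] C) g)) := by
  -- `llcomp R M B C g` is definitionally `compRight R g`, the form used in the lemmas.
  constructor
  · rintro ⟨P, _, _, _, g₀, -, hsplit⟩ B C _ _ _ _ g hg
    obtain ⟨J, hJ, hle⟩ := (isWSplitSeq_iff g₀).1 hsplit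
    exact (isGVTorsion_quotient_iff _).2 fun φ =>
      ⟨J, hJ, hle.trans (colon_id_range_compRight_le_of_projective g₀ g hg φ)⟩
  · intro H
    let g₀ : (M →₀ R) →ₗ[R] M := Finsupp.linearCombination R id
    have hg₀ : Function.Surjective g₀ := Finsupp.linearCombination_id_surjective R M
    have htors := H (M →₀ R) M _ _ _ _ g₀ hg₀
    exact ⟨M →₀ R, _, _, inferInstance, g₀, hg₀,
      (isWSplitSeq_iff g₀).2 ((isGVTorsion_quotient_iff _).1 htors LinearMap.id)⟩
end

section
/- An R-module M is w-split if and only if for every epimorphism g: B → C of R-modules and every homomorphism α: M → C, there exist a GV-ideal J = ⟨d₁,…,dₙ⟩ and homomorphisms hₖ: M → B (k = 1,…,n) such that g∘hₖ = dₖ·α for each k. -/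
open CategoryTheory

universe u

/-- `M` is w-split iff for every epimorphism `g : B → C` and every `α : M → C` there are a
GV-ideal `⟨d₁,…,dₙ⟩` and maps `hₖ : M → B` with `g∘hₖ = dₖ·α`. -/
theorem stmt6 {R : Type u} [CommRing R] {M : Type u} [AddCommGroup M] [Module R M] :
    IsWSplitModule R M ↔
      ∀ (B C : Type u) (_ : AddCommGroup B) (_ : Module R B) (_ : AddCommGroup C)
        (_ : Module R C) (g : B →ₗ[R] C), Function.Surjective g →
        ∀ α : M →ₗ[R] C,
          ∃ (n : ℕ) (d : Fin n → R), IsGVIdeal R (Ideal.span (Set.range d)) ∧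
            ∃ h : Fin n → (M →ₗ[R] B), ∀ k, ∀ x : M, g (h k x) = d k • α x := by
  constructor
  · rintro ⟨P, _, _, hP, g, hg, n, d, hGV, h, hh⟩ B C _ _ _ _ g₂ hg₂ α
    obtain ⟨β, hβ⟩ := Module.projective_lifting_property g₂ (α.comp g) hg₂
    refine ⟨n, d, hGV, fun k => β.comp (h k), fun k x => ?_⟩
    have h2 := LinearMap.congr_fun hβ (h k x)
    simp only [LinearMap.comp_apply] at h2 ⊢
    rw [h2, hh k x, map_smul]
  · intro H
    obtain ⟨n, d, hGV, h, hh⟩ := H (M →₀ R) M _ _ _ _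
      (Finsupp.linearCombination R (id : M → M)) (fun m => ⟨Finsupp.single m 1, by simp⟩) LinearMap.id
    exact ⟨M →₀ R, inferInstance, inferInstance, inferInstance,
      Finsupp.linearCombination R (id : M → M), fun m => ⟨Finsupp.single m 1, by simp⟩,
      n, d, hGV, h, fun k c => by simpa using hh k c⟩
end

section
/- An R-module M is w-split if and only if every short exact sequence 0 → A → B → M → 0 of R-modules ending in M is w-split. -/
open CategoryTheory

universe u

/-- `M` is w-split iff every short exact sequence `0 → A → B → M → 0` is w-split. -/
theorem stmt7 {R : Type u} [CommRing R] {M : Type u} [AddCommGroup M] [Module R M] :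
    IsWSplitModule R M ↔
      ∀ (A B : Type u) (_ : AddCommGroup A) (_ : Module R A) (_ : AddCommGroup B)
        (_ : Module R B) (f : A →ₗ[R] B) (g : B →ₗ[R] M),
        Function.Injective f → Function.Surjective g →
        LinearMap.range f = LinearMap.ker g → IsWSplitSeq R g := by
  constructor
  · rintro ⟨P, _, _, hP, g0, hg0surj, n, d, hGV, h, hh⟩
    intro A B _ _ _ _ f g hf hg hrange
    obtain ⟨φ, hφ⟩ := Module.projective_lifting_property g g0 hg
    refine ⟨n, d, hGV, fun k => φ.comp (h k), fun k c => ?_⟩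
    have := congrArg (fun (ψ : P →ₗ[R] M) => ψ (h k c)) hφ
    simpa using (this.trans (hh k c))
  · intro H
    classical
    set P := (M →₀ R)
    let g0 : P →ₗ[R] M := Finsupp.linearCombination R (id : M → M)
    have hsurj : Function.Surjective g0 := fun m =>
      ⟨Finsupp.single m 1, by rw [Finsupp.linearCombination_single, one_smul]; rfl⟩
    refine ⟨P, inferInstance, inferInstance, inferInstance, g0, hsurj, ?_⟩
    exact H (LinearMap.ker g0) P inferInstance inferInstance inferInstance inferInstance
      (LinearMap.ker g0).subtype g0 (Submodule.injective_subtype _) hsurj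
      (Submodule.range_subtype _)
end

section
/- An R-module M is w-split if and only if there exist elements {xᵢ}_{i∈I} of M and a GV-ideal J = ⟨d₁,…,dₙ⟩ such that for each k = 1,…,n there are homomorphisms f_{k,i}: M → R with the property that for every x ∈ M, f_{k,i}(x) = 0 for all but finitely many i and dₖx = Σᵢ f_{k,i}(x)xᵢ (a 'w-dual basis' condition). -/
open CategoryTheory

universe u

/-- w-dual basis characterization: `M` is w-split iff there are elements `xᵢ ∈ M` and a
GV-ideal `⟨d₁,…,dₙ⟩` such that for each `k` there are `f_{k,i} ∈ M*` with, for each `x`,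
`f_{k,i}(x) = 0` for almost all `i` and `dₖ x = Σᵢ f_{k,i}(x) xᵢ`. -/
theorem stmt8 {R : Type u} [CommRing R] {M : Type u} [AddCommGroup M] [Module R M] :
    IsWSplitModule R M ↔
      ∃ (ι : Type u) (x : ι → M) (n : ℕ) (d : Fin n → R),
        IsGVIdeal R (Ideal.span (Set.range d)) ∧
        ∀ k : Fin n, ∃ f : ι → (M →ₗ[R] R),
          ∀ y : M, (Function.support fun i => f i y).Finite ∧
            d k • y = ∑ᶠ i, f i y • x i := by
  constructor
  · rintro ⟨P, _, _, hP, g, hg, n, d, hGV, h, hh⟩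
    obtain ⟨s, hs⟩ := Module.projective_def.mp hP
    refine ⟨P, fun p => g p, n, d, hGV, fun k => ?_⟩
    refine ⟨fun i => (Finsupp.lapply i).comp (s.comp (h k)), fun y => ?_⟩
    have hsup : (Function.support fun i => ((Finsupp.lapply i).comp (s.comp (h k))) y)
        = ↑(s (h k y)).support := by
      exact Finsupp.fun_support_eq (s (h k y))
    constructor
    · rw [hsup]; exact (s (h k y)).support.finite_toSet
    · have h1 : d k • y = g (h k y) := (hh k y).symm
      have h2 : h k y = Finsupp.linearCombination R id (s (h k y)) := (hs (h k y)).symm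
      rw [h1, h2, Finsupp.apply_linearCombination]
      rw [Finsupp.linearCombination_apply, Finsupp.sum]
      rw [finsum_eq_finset_sum_of_support_subset _ (s := (s (h k y)).support)]
      · simp
      · intro i hi
        simp only [Function.mem_support, LinearMap.coe_comp, Function.comp_apply,
          Finsupp.lapply_apply] at hi
        simp only [Finset.mem_coe, Finsupp.mem_support_iff]
        intro h0
        exact hi (by rw [h0, zero_smul])
  · rintro ⟨ι, x, n, d, hGV, hf⟩
    choose f hfin heq using hf
    refine ⟨M →₀ R, inferInstance, inferInstance, inferInstance,
      Finsupp.linearCombination R id, fun m => ⟨Finsupp.single m 1, by simp⟩,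
      n, d, hGV, ?_⟩
    have Flin : ∀ k : Fin n, ∃ F : M →ₗ[R] (ι →₀ R), ∀ y i, F y i = f k i y := by
      intro k
      refine ⟨{ toFun := fun y => Finsupp.ofSupportFinite (fun i => f k i y) (hfin k y),
                map_add' := ?_, map_smul' := ?_ }, fun y i => ?_⟩
      · intro a b
        ext i
        simp [Finsupp.ofSupportFinite_coe]
      · intro r a
        ext i
        simp [Finsupp.ofSupportFinite_coe]
      · simp [Finsupp.ofSupportFinite_coe]
    choose F hF using Flin
    refine ⟨fun k => (Finsupp.lmapDomain R R x).comp (F k), fun k c => ?_⟩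
    simp only [LinearMap.coe_comp, Function.comp_apply, Finsupp.lmapDomain_apply]
    rw [Finsupp.linearCombination_mapDomain]
    rw [(heq k c : d k • c = _)]
    rw [Finsupp.linearCombination_apply, Finsupp.sum]
    rw [finsum_eq_finset_sum_of_support_subset _ (s := (F k c).support)]
    · refine Finset.sum_congr rfl fun i _ => ?_
      rw [hF k c i]; rfl
    · intro i hi
      simp only [Function.mem_support] at hi
      simp only [Finset.mem_coe, Finsupp.mem_support_iff, hF k c i]
      intro h0
      exact hi (by rw [h0, zero_smul])
end

section
/- Let 0 → A → B → C → 0 be a short exact sequence of R-modules in which C is w-split. Then A is w-split if and only if B is w-split. -/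
open CategoryTheory

universe u

/-!
A w-splitting of `C` transfers to every epimorphism `g : B → C` (lift `P → C` through `g`),
giving `hₖ : C → B` with `g ∘ hₖ = dₖ`; exactness then yields `tₖ : B → A` with
`f ∘ tₖ = dₖ - hₖ ∘ g` and `tₖ ∘ f = dₖ`. Thus `A × Cⁿ → B, (a, v) ↦ f a + Σ hₖ vₖ` and
`Bⁿ → A, v ↦ Σ tₖ vₖ` are w-split maps. A module receiving a w-split map from a w-split module
is w-split: compose the splittings (the product of two GV-ideals is GV) and add a free summand
to make the map from the projective module onto.
-/

variable {R : Type u} [CommRing R]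

namespace IsGVIdeal

variable {I J : Ideal R}

noncomputable def equiv (hJ : IsGVIdeal R J) : R ≃ₗ[R] (J →ₗ[R] R) :=
  LinearEquiv.ofBijective (LinearMap.lcomp R R J.subtype ∘ₗ LinearMap.lsmul R R) hJ.2

@[simp]
theorem equiv_apply (hJ : IsGVIdeal R J) (r : R) (x : J) : hJ.equiv r x = r * x := rfl

theorem ext (hJ : IsGVIdeal R J) {r s : R} (h : ∀ x ∈ J, r * x = s * x) : r = s :=
  hJ.equiv.injective (LinearMap.ext fun x => h x x.2)

theorem mul (hI : IsGVIdeal R I) (hJ : IsGVIdeal R J) : IsGVIdeal R (I * J) := by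
  refine ⟨hI.1.mul hJ.1, fun r s hrs => ?_, fun φ => ?_⟩
  · have hrs' : ∀ z ∈ I * J, r * z = s * z := fun z hz => LinearMap.congr_fun hrs ⟨z, hz⟩
    exact hI.ext fun x hx => hJ.ext fun y hy => by
      simpa only [mul_assoc] using hrs' _ (Ideal.mul_mem_mul hx hy)
  · -- `J` being GV gives a linear `ψ : I → R` with `φ (x * y) = ψ x * y`; `I` being GV gives
    -- `ψ x = r * x`; and `I ⊗ J → I * J` is onto.
    let ψ : I →ₗ[R] R :=
      hJ.equiv.symm.toLinearMap ∘ₗ TensorProduct.curry (φ ∘ₗ Submodule.mulMap' I J)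
    refine ⟨hI.equiv.symm ψ, ?_⟩
    refine (LinearMap.cancel_right (Submodule.mulMap'_surjective I J)).1
      (TensorProduct.ext' fun x y => ?_)
    have hψ : ψ x * y = φ (Submodule.mulMap' I J (x ⊗ₜ y)) :=
      LinearMap.congr_fun (hJ.equiv.apply_symm_apply
        (TensorProduct.curry (φ ∘ₗ Submodule.mulMap' I J) x)) y
    have hr : hI.equiv.symm ψ * x = ψ x := LinearMap.congr_fun (hI.equiv.apply_symm_apply ψ) x
    simp [← hψ, ← hr, mul_assoc]

theorem span_range_mul {ι κ : Type*} {d : ι → R} {e : κ → R}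
    (hd : IsGVIdeal R (Ideal.span (Set.range d))) (he : IsGVIdeal R (Ideal.span (Set.range e))) :
    IsGVIdeal R (Ideal.span (Set.range fun p : ι × κ => d p.1 * e p.2)) := by
  rw [← Set.image2_range, Set.image2_mul, ← Ideal.span_mul_span']
  exact hd.mul he

end IsGVIdeal

section WSplit

variable {M N X Y Z : Type u} [AddCommGroup M] [Module R M] [AddCommGroup N] [Module R N]
  [AddCommGroup X] [Module R X] [AddCommGroup Y] [Module R Y] [AddCommGroup Z] [Module R Z]

theorem IsWSplitSeq.of_fintype {ι : Type*} [Fintype ι] {g : Y →ₗ[R] Z} (d : ι → R)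
    (hd : IsGVIdeal R (Ideal.span (Set.range d))) (h : ι → Z →ₗ[R] Y)
    (hgh : ∀ i z, g (h i z) = d i • z) : IsWSplitSeq R g := by
  let e := Fintype.equivFin ι
  refine ⟨Fintype.card ι, d ∘ e.symm, ?_, h ∘ e.symm, fun k => hgh (e.symm k)⟩
  rwa [e.symm.surjective.range_comp]

theorem IsWSplitSeq.comp {g₁ : X →ₗ[R] Y} {g₂ : Y →ₗ[R] Z} (h₁ : IsWSplitSeq R g₁)
    (h₂ : IsWSplitSeq R g₂) : IsWSplitSeq R (g₂ ∘ₗ g₁) := by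
  obtain ⟨m, d, hd, s₁, hs₁⟩ := h₁
  obtain ⟨n, e, he, s₂, hs₂⟩ := h₂
  refine .of_fintype _ (hd.span_range_mul he) (fun p => s₁ p.1 ∘ₗ s₂ p.2) fun p z => ?_
  simp [hs₁, hs₂, mul_smul]

theorem IsWSplitSeq.prodMap {g₁ : X →ₗ[R] M} {g₂ : Y →ₗ[R] N} (h₁ : IsWSplitSeq R g₁)
    (h₂ : IsWSplitSeq R g₂) : IsWSplitSeq R (g₁.prodMap g₂) := by
  obtain ⟨m, d, hd, s₁, hs₁⟩ := h₁
  obtain ⟨n, e, he, s₂, hs₂⟩ := h₂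
  refine .of_fintype _ (hd.span_range_mul he)
    (fun p => (e p.2 • s₁ p.1).prodMap (d p.1 • s₂ p.2)) fun p z => ?_
  ext <;> simp [hs₁, hs₂, smul_smul, mul_comm]

theorem IsWSplitSeq.piMap {ι : Type} {g : Y →ₗ[R] Z} (hg : IsWSplitSeq R g) :
    IsWSplitSeq R (LinearMap.piMap fun _ : ι => g) := by
  obtain ⟨n, d, hd, s, hs⟩ := hg
  exact ⟨n, d, hd, fun k => LinearMap.piMap fun _ => s k, fun k z => funext fun i => hs k (z i)⟩

instance Module.Projective.pi {ι : Type} [Fintype ι] {P : Type u} [AddCommGroup P] [Module R P]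
    [Module.Projective R P] : Module.Projective R (ι → P) := by
  classical
  exact .of_equiv (DFinsupp.linearEquivFunOnFintype (R := R) (M := fun _ : ι => P))

namespace IsWSplitModule

theorem of_projective_of_isWSplitSeq {P : Type u} [AddCommGroup P] [Module R P]
    [Module.Projective R P] {g : P →ₗ[R] M} (hg : IsWSplitSeq R g) : IsWSplitModule R M := by
  obtain ⟨n, d, hd, s, hs⟩ := hg
  refine ⟨P × (M →₀ R), inferInstance, inferInstance, inferInstance,
    g.coprod (Finsupp.linearCombination R id), fun m => ⟨(0, Finsupp.single m 1), by simp⟩,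
    n, d, hd, fun k => LinearMap.inl R P (M →₀ R) ∘ₗ s k, fun k m => by simp [hs]⟩

theorem of_isWSplitSeq (hX : IsWSplitModule R X) {g : X →ₗ[R] M} (hg : IsWSplitSeq R g) :
    IsWSplitModule R M := by
  obtain ⟨P, _, _, _, α, -, hα⟩ := hX
  exact of_projective_of_isWSplitSeq (hα.comp hg)

theorem prod (hM : IsWSplitModule R M) (hN : IsWSplitModule R N) : IsWSplitModule R (M × N) := by
  obtain ⟨P, _, _, _, α, -, hα⟩ := hM
  obtain ⟨Q, _, _, _, β, -, hβ⟩ := hN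
  exact of_projective_of_isWSplitSeq (hα.prodMap hβ)

theorem pi (ι : Type) [Fintype ι] (hM : IsWSplitModule R M) : IsWSplitModule R (ι → M) := by
  obtain ⟨P, _, _, _, α, -, hα⟩ := hM
  exact of_projective_of_isWSplitSeq (hα.piMap (ι := ι))

theorem isWSplitSeq_of_surjective (hM : IsWSplitModule R M) {g : X →ₗ[R] M}
    (hg : Function.Surjective g) : IsWSplitSeq R g := by
  obtain ⟨P, _, _, _, q, -, n, d, hd, s, hs⟩ := hM
  obtain ⟨σ, hσ⟩ := Module.projective_lifting_property g q hg
  exact ⟨n, d, hd, fun k => σ ∘ₗ s k, fun k m =>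
    (LinearMap.congr_fun hσ (s k m)).trans (hs k m)⟩

end IsWSplitModule

end WSplit

theorem exists_factor_smul_sub_comp_of_exact {A B C : Type u} [AddCommGroup A] [Module R A]
    [AddCommGroup B] [Module R B] [AddCommGroup C] [Module R C] {f : A →ₗ[R] B} {g : B →ₗ[R] C}
    (hf : Function.Injective f) (hfg : LinearMap.range f = LinearMap.ker g) {d : R}
    (h : C →ₗ[R] B) (hgh : ∀ c, g (h c) = d • c) :
    ∃ t : B →ₗ[R] A, (∀ b, f (t b) = d • b - h (g b)) ∧ ∀ a, t (f a) = d • a := by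
  let u : B →ₗ[R] B := d • LinearMap.id - h ∘ₗ g
  have hu : ∀ b, u b ∈ LinearMap.range f := fun b => by simp [u, hfg, hgh]
  let e := LinearEquiv.ofInjective f hf
  let t := e.symm.toLinearMap ∘ₗ u.codRestrict _ hu
  have hft : ∀ b, f (t b) = d • b - h (g b) := fun b =>
    congrArg Subtype.val (e.apply_symm_apply ⟨u b, hu b⟩)
  refine ⟨t, hft, fun a => hf ?_⟩
  have hgf : g (f a) = 0 := LinearMap.mem_ker.1 (hfg ▸ LinearMap.mem_range_self f a)
  simp [hft, hgf]

/-- If `0 → A → B → C → 0` is exact with `C` w-split, then `A` is w-split iff `B` is. -/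
theorem stmt10 {R : Type u} [CommRing R] {A B C : Type u}
    [AddCommGroup A] [Module R A] [AddCommGroup B] [Module R B] [AddCommGroup C] [Module R C]
    (f : A →ₗ[R] B) (g : B →ₗ[R] C)
    (hf : Function.Injective f) (hg : Function.Surjective g)
    (hfg : LinearMap.range f = LinearMap.ker g)
    (hC : IsWSplitModule R C) :
    IsWSplitModule R A ↔ IsWSplitModule R B := by
  obtain ⟨n, d, hd, h, hgh⟩ := hC.isWSplitSeq_of_surjective hg
  choose t hft htf using fun k => exists_factor_smul_sub_comp_of_exact hf hfg (h k) (hgh k)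
  constructor
  · intro hA
    refine (hA.prod (hC.pi (Fin n))).of_isWSplitSeq
      (g := f.coprod (LinearMap.lsum R (fun _ => C) R h))
      ⟨n, d, hd, fun k => (t k).prod (LinearMap.single R (fun _ => C) k ∘ₗ g), fun k b => ?_⟩
    simp only [LinearMap.coprod_apply, LinearMap.prod_apply, Function.prod, LinearMap.comp_apply,
      LinearMap.coe_single, LinearMap.lsum_piSingle, hft, sub_add_cancel]
  · intro hB
    refine (hB.pi (Fin n)).of_isWSplitSeq (g := LinearMap.lsum R (fun _ => B) R t)
      ⟨n, d, hd, fun k => LinearMap.single R (fun _ => B) k ∘ₗ f, fun k a => ?_⟩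
    simp only [LinearMap.comp_apply, LinearMap.coe_single, LinearMap.lsum_piSingle, htf]
end

section
/- Every w-projective w-module over R is w-split. -/
open CategoryTheory

universe u

/-! A w-module `M` is GV-torsionfree, so `L(M) = M` and w-projectivity makes `Ext¹(M, N)`
GV-torsion for every w-module `N`. Write `M` as a quotient `g : F → M` of a free module with
kernel `K`. Maps from a GV-ideal into `F` extend to `R`, and since `M` is GV-torsionfree the
same holds for `K`, so `K` is a w-module. Computing `Ext¹(M, K)` from a resolution that starts
with `g`, the class of `id_K` is killed by a GV-ideal `J = (d₁, …, dₙ)`: each `dₖ • id_K`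
extends to `F`, and such an extension yields `hₖ : M → F` with `g ∘ hₖ = dₖ • id_M`. -/

section GV

variable {R : Type u} [CommRing R]

theorem isGVIdeal_top : IsGVIdeal R ⊤ := by
  refine ⟨⟨{1}, by simp⟩, fun r r' h => ?_, fun f => ⟨f ⟨1, trivial⟩, ?_⟩⟩
  · simpa using LinearMap.congr_fun h ⟨1, trivial⟩
  · ext ⟨x, hx⟩
    have hx1 : (⟨x, hx⟩ : (⊤ : Ideal R)) = x • ⟨1, trivial⟩ := Subtype.ext (mul_one x).symm
    simp [hx1, mul_comm]

theorem IsGVIdeal.eq_zero_of_forall_mul_eq_zero {J : Ideal R} (hJ : IsGVIdeal R J) {x : R}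
    (hx : ∀ a ∈ J, a * x = 0) : x = 0 :=
  hJ.2.1 <| LinearMap.ext fun a => by simp [mul_comm x, hx a a.2]

theorem IsGVTorsionFree.of_injective {A B : Type u} [AddCommGroup A] [Module R A]
    [AddCommGroup B] [Module R B] {φ : A →ₗ[R] B} (hφ : Function.Injective φ)
    (hB : IsGVTorsionFree R B) : IsGVTorsionFree R A := by
  rintro x ⟨J, hJ, hx⟩
  exact hφ <| (hB (φ x) ⟨J, hJ, fun a ha => by rw [← map_smul, hx a ha, map_zero]⟩).trans
    φ.map_zero.symm

theorem isGVTorsionFree_finsupp (ι : Type u) : IsGVTorsionFree R (ι →₀ R) := by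
  rintro x ⟨J, hJ, hx⟩
  ext i
  exact hJ.eq_zero_of_forall_mul_eq_zero fun a ha => by simpa using congr($(hx a ha) i)

end GV

section GVExtension

variable {R : Type u} [CommRing R]

variable (R) in
def HasGVExtension (N : Type u) [AddCommGroup N] [Module R N] : Prop :=
  ∀ J : Ideal R, IsGVIdeal R J → ∀ f : J →ₗ[R] N, ∃ x : N, ∀ a : J, f a = (a : R) • x

variable (R) in
theorem hasGVExtension_self : HasGVExtension R R := fun J hJ f => by
  obtain ⟨x, rfl⟩ := hJ.2.2 f
  exact ⟨x, fun a => mul_comm _ _⟩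

theorem hasGVExtension_finsupp (ι : Type u) : HasGVExtension R (ι →₀ R) := by
  classical
  intro J hJ f
  choose x hx using fun i => hasGVExtension_self R J hJ (Finsupp.lapply i ∘ₗ f)
  replace hx : ∀ i (a : J), f a i = a * x i := hx
  obtain ⟨s, hs⟩ := hJ.1
  have hsJ : ∀ a ∈ s, a ∈ J := fun a ha => hs ▸ Ideal.subset_span ha
  -- outside `S` the coordinate `x i` is killed by the generators of `J`, hence vanishes
  let S := s.attach.biUnion fun a => (f ⟨a, hsJ a a.2⟩).support
  have hxS : ∀ i ∉ S, x i = 0 := fun i hi => hJ.eq_zero_of_forall_mul_eq_zero fun a ha => by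
    suffices J ≤ LinearMap.ker (LinearMap.toSpanSingleton R R (x i)) from this ha
    rw [← hs, Ideal.span_le]
    intro b hb
    simp only [S, Finset.mem_biUnion, Finset.mem_attach, Finsupp.mem_support_iff, true_and,
      not_exists, not_not, hx] at hi
    exact hi ⟨b, hb⟩
  refine ⟨Finsupp.onFinset S x fun i hi => not_imp_comm.1 (hxS i) hi, fun a => ?_⟩
  ext i
  simp [hx i a]

theorem HasGVExtension.ker {F M : Type u} [AddCommGroup F] [Module R F] [AddCommGroup M]
    [Module R M] (hF : HasGVExtension R F) (hM : IsGVTorsionFree R M) (g : F →ₗ[R] M) :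
    HasGVExtension R (LinearMap.ker g) := fun J hJ f => by
  obtain ⟨x, hx⟩ := hF J hJ ((LinearMap.ker g).subtype ∘ₗ f)
  have hgx : g x = 0 := hM (g x) ⟨J, hJ, fun a ha => by
    rw [← map_smul, ← hx ⟨a, ha⟩]
    exact (f ⟨a, ha⟩).2⟩
  exact ⟨⟨x, hgx⟩, fun a => Subtype.ext (hx a)⟩

end GVExtension

noncomputable section SyzygyComplex

variable {R : Type u} [CommRing R]

def freeSyzygy {X Y : ModuleCat.{u} R} (f : X ⟶ Y) :
    Σ' (Z : ModuleCat.{u} R) (d : Z ⟶ X), d ≫ f = 0 :=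
  ⟨.of R (LinearMap.ker f.hom →₀ R),
    ModuleCat.ofHom ((LinearMap.ker f.hom).subtype ∘ₗ Finsupp.linearCombination R id),
    ModuleCat.hom_ext (LinearMap.ext fun x => (Finsupp.linearCombination R id x).2)⟩

lemma range_freeSyzygy_d {X Y : ModuleCat.{u} R} (f : X ⟶ Y) :
    LinearMap.range (freeSyzygy f).2.1.hom = LinearMap.ker f.hom := by
  rw [freeSyzygy, ModuleCat.hom_ofHom, LinearMap.range_comp_of_range_eq_top _
    (LinearMap.range_eq_top.2 (Finsupp.linearCombination_id_surjective R _)),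
    Submodule.range_subtype]

variable {M P : Type u} [AddCommGroup M] [Module R M] [AddCommGroup P] [Module R P]

def syzygyComplex (g : P →ₗ[R] M) : ChainComplex (ModuleCat.{u} R) ℕ :=
  ChainComplex.mk' (.of R P) _ (freeSyzygy (ModuleCat.ofHom g)).2.1 fun f => freeSyzygy f

variable (g : P →ₗ[R] M)

lemma syzygyComplex_d_one_zero :
    (syzygyComplex g).d 1 0 = (freeSyzygy (ModuleCat.ofHom g)).2.1 :=
  ChainComplex.mk'_d_1_0 ..

lemma range_syzygyComplex_d_succ (n : ℕ) :
    LinearMap.range ((syzygyComplex g).d (n + 2) (n + 1)).hom =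
      LinearMap.ker ((syzygyComplex g).d (n + 1) n).hom := by
  rw [syzygyComplex, ChainComplex.mk'_d, ModuleCat.hom_comp, LinearMap.range_comp_of_range_eq_top]
  · exact range_freeSyzygy_d _
  · exact LinearMap.range_eq_top.2 (ConcreteCategory.bijective_of_isIso _).2

lemma syzygyComplex_exactAt_succ (n : ℕ) : (syzygyComplex g).ExactAt (n + 1) := by
  rw [HomologicalComplex.exactAt_iff' _ (n + 2) (n + 1) n (by simp) (by simp),
    ShortComplex.moduleCat_exact_iff_range_eq_ker]
  exact range_syzygyComplex_d_succ g n

instance syzygyComplex_projective [Module.Projective R P] (n : ℕ) :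
    Projective ((syzygyComplex g).X n) := by
  match n with
  | 0 => exact (IsProjective.iff_projective.{u, u} P).mp inferInstance
  | 1 => exact ModuleCat.projective_of_free.{u, u} Finsupp.basisSingleOne
  | n + 2 =>
    exact Projective.of_iso (ChainComplex.mk'XIso _ _ _ _ n).symm
      (ModuleCat.projective_of_free.{u, u} Finsupp.basisSingleOne)

lemma syzygyComplex_d_one_zero_comp : (syzygyComplex g).d 1 0 ≫ ModuleCat.ofHom g = 0 := by
  rw [syzygyComplex_d_one_zero]
  exact (freeSyzygy _).2.2

def syzygyResolution [Module.Projective R P] (hg : Function.Surjective g) :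
    ProjectiveResolution (ModuleCat.of R M) where
  complex := syzygyComplex g
  π := (ChainComplex.toSingle₀Equiv _ _).symm ⟨_, syzygyComplex_d_one_zero_comp g⟩
  quasiIso := ⟨fun n => by
    cases n
    · rw [ChainComplex.quasiIsoAt₀_iff, ShortComplex.quasiIso_iff_of_zeros']
      · refine (ShortComplex.exact_and_epi_g_iff_of_iso (S₂ := ShortComplex.mk _ _
          (syzygyComplex_d_one_zero_comp g)) ?_).2
          ⟨ShortComplex.Exact.moduleCat_of_range_eq_ker _ _ ?_,
            (ModuleCat.epi_iff_surjective _).2 hg⟩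
        · exact ShortComplex.isoMk (Iso.refl _) (Iso.refl _) (Iso.refl _)
            ((Category.id_comp _).trans (Category.comp_id _).symm)
            ((Category.id_comp _).trans (Category.comp_id _).symm)
        · rw [syzygyComplex_d_one_zero]
          exact range_freeSyzygy_d _
      all_goals rfl
    · rw [quasiIsoAt_iff_exactAt']
      · apply syzygyComplex_exactAt_succ
      · apply ChainComplex.exactAt_succ_single_obj⟩

end SyzygyComplex

noncomputable section ExtOne

variable {R : Type u} [CommRing R] {M P : Type u} [AddCommGroup M] [Module R M]
  [AddCommGroup P] [Module R P] (g : P →ₗ[R] M)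

theorem LinearMap.exists_comp_eq_of_ker_le {A B C : Type*} [AddCommGroup A] [Module R A]
    [AddCommGroup B] [Module R B] [AddCommGroup C] [Module R C] {q : A →ₗ[R] B}
    (hq : Function.Surjective q) {φ : A →ₗ[R] C} (h : LinearMap.ker q ≤ LinearMap.ker φ) :
    ∃ f : B →ₗ[R] C, f ∘ₗ q = φ :=
  ⟨(LinearMap.ker q).liftQ φ h ∘ₗ (q.quotKerEquivOfSurjective hq).symm.toLinearMap, by
    ext a
    rw [LinearMap.comp_apply, LinearMap.comp_apply, LinearEquiv.coe_coe,
      show (q.quotKerEquivOfSurjective hq).symm (q a) = Submodule.Quotient.mk a from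
        (LinearEquiv.symm_apply_eq _).2 rfl, Submodule.liftQ_apply]⟩

abbrev syzygyComplexOneToKer : (syzygyComplex g).X 1 →ₗ[R] LinearMap.ker g :=
  Finsupp.linearCombination R id

lemma ker_syzygyComplexOneToKer :
    LinearMap.ker (syzygyComplexOneToKer g) = LinearMap.range ((syzygyComplex g).d 2 1).hom := by
  rw [range_syzygyComplex_d_succ, syzygyComplex_d_one_zero]
  exact (LinearMap.ker_comp_of_ker_eq_bot _ (Submodule.ker_subtype _)).symm

theorem exists_surjective_extMod_one [Module.Projective R P] (hg : Function.Surjective g)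
    (N : Type u) [AddCommGroup N] [Module R N] :
    ∃ δ : (LinearMap.ker g →ₗ[R] N) →ₗ[R] extMod R M 1 N, Function.Surjective δ ∧
      ∀ f, δ f = 0 ↔ ∃ h : P →ₗ[R] N, h ∘ₗ (LinearMap.ker g).subtype = f := by
  let S := ((syzygyComplex g).linearYonedaObj R (ModuleCat.of R N)).sc' 0 1 2
  let e : extMod R M 1 N ≅ S.moduleCatLeftHomologyData.H :=
    (syzygyResolution g hg).isoExt 1 (ModuleCat.of R N) ≪≫
      HomologicalComplex.homologyIsoSc' _ 0 1 2 (by simp) (by simp) ≪≫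
      S.moduleCatLeftHomologyData.homologyIso
  let q := syzygyComplexOneToKer g
  have hq : Function.Surjective q := Finsupp.linearCombination_id_surjective R _
  have hcycle : ∀ f : LinearMap.ker g →ₗ[R] N,
      (ModuleCat.homLinearEquiv (S := R)).symm (f ∘ₗ q) ∈ LinearMap.ker S.g.hom := fun f =>
    ModuleCat.hom_ext (LinearMap.ext fun x =>
      (congrArg f ((ker_syzygyComplexOneToKer g).ge ⟨x, rfl⟩)).trans (map_zero f))
  let c : (LinearMap.ker g →ₗ[R] N) →ₗ[R] LinearMap.ker S.g.hom :=
    LinearMap.codRestrict _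
      ((ModuleCat.homLinearEquiv (S := R)).symm.toLinearMap ∘ₗ LinearMap.lcomp R N q) hcycle
  refine ⟨e.toLinearEquiv.symm.toLinearMap ∘ₗ Submodule.mkQ _ ∘ₗ c, ?_, fun f => ?_⟩
  · refine e.toLinearEquiv.symm.surjective.comp ((Submodule.mkQ_surjective _).comp ?_)
    rintro ⟨φ, hφ⟩
    obtain ⟨f, hf⟩ := LinearMap.exists_comp_eq_of_ker_le hq (φ := φ.hom) fun x hx => by
      obtain ⟨y, rfl⟩ := (ker_syzygyComplexOneToKer g).le hx
      have hφ' : (syzygyComplex g).d 2 1 ≫ φ = 0 := hφ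
      exact congr(ModuleCat.Hom.hom $hφ' y)
    exact ⟨f, Subtype.ext (ModuleCat.hom_ext hf)⟩
  · refine (e.toLinearEquiv.symm.map_eq_zero_iff (x := Submodule.mkQ _ (c f))).trans
      ((Submodule.Quotient.mk_eq_zero _).trans ?_)
    constructor
    · rintro ⟨φ, hφ⟩
      refine ⟨φ.hom, (LinearMap.cancel_right hq).1 ?_⟩
      exact congr(ModuleCat.Hom.hom (Subtype.val $hφ))
    · rintro ⟨h, rfl⟩
      exact ⟨ModuleCat.ofHom h, rfl⟩

theorem subsingleton_extMod_one_of_forall_exists_comp_eq [Module.Projective R P]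
    (hg : Function.Surjective g) {N : Type u} [AddCommGroup N] [Module R N]
    (hext : ∀ f : LinearMap.ker g →ₗ[R] N, ∃ h : P →ₗ[R] N, h ∘ₗ (LinearMap.ker g).subtype = f) :
    Subsingleton (extMod R M 1 N) := by
  obtain ⟨δ, hδ, hδ_eq_zero⟩ := exists_surjective_extMod_one g hg N
  refine subsingleton_of_forall_eq 0 fun y => ?_
  obtain ⟨f, rfl⟩ := hδ y
  exact (hδ_eq_zero f).2 (hext f)

theorem exists_comp_eq_smul_of_comp_subtype_eq_smul (hg : Function.Surjective g) {a : R}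
    {k : P →ₗ[R] LinearMap.ker g} (hk : k ∘ₗ (LinearMap.ker g).subtype = a • LinearMap.id) :
    ∃ h : M →ₗ[R] P, ∀ c, g (h c) = a • c := by
  obtain ⟨h, hh⟩ := LinearMap.exists_comp_eq_of_ker_le hg
    (φ := a • LinearMap.id - (LinearMap.ker g).subtype ∘ₗ k) fun x hx => by
      have hkx : k x = a • ⟨x, hx⟩ := LinearMap.congr_fun hk ⟨x, hx⟩
      simp [hkx]
  refine ⟨h, fun c => ?_⟩
  obtain ⟨p, rfl⟩ := hg c
  have hgk : g (k p) = 0 := (k p).2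
  simp [← LinearMap.comp_apply h g, hh, hgk]

theorem isWSplitSeq_of_isGVTorsion_extMod_one [Module.Projective R P]
    (hg : Function.Surjective g) (htor : IsGVTorsion R (extMod R M 1 (LinearMap.ker g))) :
    IsWSplitSeq R g := by
  obtain ⟨δ, -, hδ_eq_zero⟩ := exists_surjective_extMod_one g hg (LinearMap.ker g)
  obtain ⟨J, hJ, hJδ⟩ := htor (δ LinearMap.id)
  have hsplit : ∀ a ∈ J, ∃ h : M →ₗ[R] P, ∀ c, g (h c) = a • c := fun a ha => by
    obtain ⟨k, hk⟩ := (hδ_eq_zero (a • LinearMap.id)).1 (by rw [map_smul, hJδ a ha])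
    exact exists_comp_eq_smul_of_comp_subtype_eq_smul g hg hk
  obtain ⟨n, d, hd⟩ := Submodule.fg_iff_exists_fin_generating_family.1 hJ.1
  have hdJ : ∀ k, d k ∈ J := fun k => hd ▸ Submodule.subset_span ⟨k, rfl⟩
  choose h hh using fun k => hsplit (d k) (hdJ k)
  refine ⟨n, d, ?_, h, hh⟩
  rwa [Ideal.span, hd]

end ExtOne

section WModule

variable {R : Type u} [CommRing R]

theorem isWModule_of_hasGVExtension {N : Type u} [AddCommGroup N] [Module R N]
    (hN : IsGVTorsionFree R N) (hext : HasGVExtension R N) : IsWModule R N := by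
  refine ⟨hN, fun J hJ => subsingleton_extMod_one_of_forall_exists_comp_eq J.mkQ
    J.mkQ_surjective fun f => ?_⟩
  have hJ_le : J ≤ LinearMap.ker J.mkQ := (Submodule.ker_mkQ J).ge
  obtain ⟨x, hx⟩ := hext J hJ (f ∘ₗ Submodule.inclusion hJ_le)
  refine ⟨LinearMap.toSpanSingleton R N x, LinearMap.ext fun a => ?_⟩
  exact (hx ⟨a, (Submodule.ker_mkQ J).le a.2⟩).symm

theorem isWEnvelope_of_linearEquiv {A E : Type u} [AddCommGroup A] [Module R A]
    [AddCommGroup E] [Module R E] (e : A ≃ₗ[R] E) (hE : IsWModule R E) :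
    IsWEnvelope R A E e.toLinearMap := by
  refine ⟨e.injective, hE, fun x => ⟨⊤, isGVIdeal_top, fun a _ => ?_⟩⟩
  have : Subsingleton (E ⧸ LinearMap.range e.toLinearMap) :=
    Submodule.Quotient.subsingleton_iff.2 (LinearEquiv.range e)
  exact Subsingleton.elim _ _

theorem IsGVTorsionFree.mem_bot_iff {M : Type u} [AddCommGroup M] [Module R M]
    (hM : IsGVTorsionFree R M) (x : M) :
    x ∈ (⊥ : Submodule R M) ↔ ∃ J : Ideal R, IsGVIdeal R J ∧ ∀ a ∈ J, a • x = 0 := by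
  refine ⟨fun hx => ⟨⊤, isGVIdeal_top, fun a _ => ?_⟩, fun hx => (Submodule.mem_bot R).2 (hM x hx)⟩
  rw [(Submodule.mem_bot R).1 hx, smul_zero]

theorem IsWProjective.isGVTorsion_extMod_one {M N : Type u} [AddCommGroup M] [Module R M]
    [AddCommGroup N] [Module R N] (hP : IsWProjective R M) (hM : IsWModule R M)
    (hN : IsWModule R N) : IsGVTorsion R (extMod R M 1 N) :=
  hP ⊥ hM.1.mem_bot_iff M _ _ _ (isWEnvelope_of_linearEquiv (Submodule.quotEquivOfEqBot ⊥ rfl) hM)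
    N _ _ hN.1 hN

end WModule

/-- Every w-projective w-module is w-split. -/
theorem stmt13 {R : Type u} [CommRing R] {M : Type u} [AddCommGroup M] [Module R M]
    (h1 : IsWProjective R M) (h2 : IsWModule R M) : IsWSplitModule R M := by
  let g : (M →₀ R) →ₗ[R] M := Finsupp.linearCombination R id
  have hg : Function.Surjective g := Finsupp.linearCombination_id_surjective R M
  have hK : IsWModule R (LinearMap.ker g) :=
    isWModule_of_hasGVExtension
      ((isGVTorsionFree_finsupp M).of_injective (LinearMap.ker g).injective_subtype)
      ((hasGVExtension_finsupp M).ker h2.1 g)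
  exact ⟨M →₀ R, _, _, inferInstance, g, hg,
    isWSplitSeq_of_isGVTorsion_extMod_one g hg (h1.isGVTorsion_extMod_one h2 hK)⟩
end

section
/- Let 0 → P →f F →g M → 0 be a w-split exact sequence with F a w-module admitting a direct sum decomposition F = ⊕_{i∈I} F_i into countably generated submodules, and suppose the sequence restricted to F(H) = ⊕_{j∈H} F_j (for a proper subset H ⊆ I) is a w-split exact sequence induced with respect to F(H), i.e., hₖ(M(H)) ⊆ F(H) for the chosen splitting maps hₖ. Then there exists a subset H₁ ⊆ I properly containing H such that the restricted sequence 0 → P(H₁) → F(H₁) → M(H₁) → 0 is a w-split exact sequence induced with respect to F(H₁), and M(H₁)/M(H) is countably generated. -/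
open CategoryTheory

universe u

/-- Enlarging an induced w-split subsequence: given a w-split exact sequence
`0 → P → F → M → 0` with `F` a w-module decomposing as `F = ⊕ᵢ Fᵢ` with each `Fᵢ`
countably generated, and a proper subset `H ⊆ I` for which the restricted sequence is
induced (`hₖ(M(H)) ⊆ F(H)`), there is `H₁ ⊋ H` whose restricted sequence is induced and
with `M(H₁)/M(H)` countably generated. -/
theorem stmt17 {R : Type u} [CommRing R] {P F M : Type u}
    [AddCommGroup P] [Module R P] [AddCommGroup F] [Module R F] [AddCommGroup M] [Module R M]
    (f : P →ₗ[R] F) (g : F →ₗ[R] M)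
    (hf : Function.Injective f) (hg : Function.Surjective g)
    (hfg : LinearMap.range f = LinearMap.ker g)
    (hF : IsWModule R F)
    {I : Type u} (Fi : I → Submodule R F)
    (hindep : iSupIndep Fi) (hsum : iSup Fi = ⊤)
    (hcg : ∀ i, ∃ S : Set F, S.Countable ∧ Fi i = Submodule.span R S)
    (n : ℕ) (d : Fin n → R) (hGV : IsGVIdeal R (Ideal.span (Set.range d)))
    (h : Fin n → (M →ₗ[R] F)) (hsplit : ∀ k, ∀ x : M, g (h k x) = d k • x)
    (H : Set I) (hH : H ≠ Set.univ)
    (hind : ∀ k, Submodule.map (h k) (Submodule.map g (⨆ j ∈ H, Fi j)) ≤ ⨆ j ∈ H, Fi j) :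
    ∃ H₁ : Set I, H ⊂ H₁ ∧
      (∀ k, Submodule.map (h k) (Submodule.map g (⨆ j ∈ H₁, Fi j)) ≤ ⨆ j ∈ H₁, Fi j) ∧
      ∃ S : Set M, S.Countable ∧
        Submodule.map g (⨆ j ∈ H₁, Fi j) =
          Submodule.map g (⨆ j ∈ H, Fi j) ⊔ Submodule.span R S := by
  classical
  -- choose generating sets
  choose S hScount hSspan using hcg
  -- choose a not-in-H index
  obtain ⟨i₀, hi₀⟩ : ∃ i, i ∉ H := by
    by_contra hc
    push_neg at hc
    exact hH (Set.eq_univ_of_forall hc)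
  -- support function
  have hsupp : ∀ x : F, ∃ t : Finset I, x ∈ ⨆ i ∈ t, Fi i := by
    intro x
    exact Submodule.exists_finset_of_mem_iSup Fi (by rw [hsum]; trivial)
  choose supp hsuppmem using hsupp
  -- iterative closure
  let step : Set I → Set I := fun C =>
    C ∪ ⋃ j ∈ C, ⋃ s ∈ S j, ⋃ k : Fin n, (supp (h k (g s)) : Set I)
  let Cm : ℕ → Set I := fun m => Nat.rec ({i₀} : Set I) (fun _ C => step C) m
  let C : Set I := ⋃ m, Cm m
  have hCmono : ∀ m, Cm m ⊆ Cm (m + 1) := fun m => Set.subset_union_left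
  have hCmcount : ∀ m, (Cm m).Countable := by
    intro m
    induction m with
    | zero => exact Set.countable_singleton i₀
    | succ m ih =>
      refine ih.union (Set.Countable.biUnion ih fun j _ => ?_)
      exact Set.Countable.biUnion (hScount j) fun s _ =>
        Set.countable_iUnion fun k => (supp (h k (g s))).countable_toSet
  have hCcount : C.Countable := Set.countable_iUnion hCmcount
  set H₁ : Set I := H ∪ C with hH₁def
  -- closure property
  have hclos : ∀ j ∈ C, ∀ s ∈ S j, ∀ k : Fin n, h k (g s) ∈ ⨆ i ∈ H₁, Fi i := by
    intro j hj s hs k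
    obtain ⟨m, hm⟩ := Set.mem_iUnion.mp hj
    have hsub : (supp (h k (g s)) : Set I) ⊆ Cm (m + 1) := by
      intro i hi
      refine Set.mem_union_right _ ?_
      exact Set.mem_biUnion hm (Set.mem_biUnion hs (Set.mem_iUnion.mpr ⟨k, hi⟩))
    have hsub2 : (supp (h k (g s)) : Set I) ⊆ H₁ := fun i hi =>
      Set.mem_union_right _ (Set.mem_iUnion.mpr ⟨m + 1, hsub hi⟩)
    refine (biSup_mono hsub2 : (⨆ i ∈ (supp (h k (g s)) : Set I), Fi i) ≤ _) ?_
    simpa using hsuppmem (h k (g s))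
  -- decompose the sup over H₁
  have hdecomp : (⨆ j ∈ H₁, Fi j) = (⨆ j ∈ H, Fi j) ⊔ ⨆ j ∈ C, Fi j := by
    rw [hH₁def, iSup_union]
  have hCspan : (⨆ j ∈ C, Fi j) = Submodule.span R (⋃ j ∈ C, S j) := by
    rw [Submodule.span_iUnion₂]
    exact iSup_congr fun j => iSup_congr fun _ => hSspan j
  refine ⟨H₁, ?_, ?_, ?_⟩
  · constructor
    · exact Set.subset_union_left
    · intro hsub
      exact hi₀ (hsub (Set.mem_union_right _ (Set.mem_iUnion.mpr ⟨0, rfl⟩)))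
  · intro k
    have heq : Submodule.map (h k) (Submodule.map g (⨆ j ∈ H₁, Fi j)) =
        Submodule.map (h k) (Submodule.map g (⨆ j ∈ H, Fi j)) ⊔
          Submodule.map (h k) (Submodule.map g (⨆ j ∈ C, Fi j)) := by
      rw [hdecomp, Submodule.map_sup, Submodule.map_sup]
    rw [heq]
    refine sup_le (le_trans (hind k) (biSup_mono Set.subset_union_left)) ?_
    rw [hCspan, ← Submodule.map_comp, Submodule.map_span, Submodule.span_le]
    rintro x ⟨s, hs, rfl⟩
    obtain ⟨j, hj⟩ := Set.mem_iUnion.mp hs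
    obtain ⟨hjC, hsj⟩ := Set.mem_iUnion.mp hj
    exact hclos j hjC s hsj k
  · refine ⟨g '' ⋃ j ∈ C, S j, ?_, ?_⟩
    · exact Set.Countable.image (Set.Countable.biUnion hCcount fun j _ => hScount j) g
    · rw [hdecomp, Submodule.map_sup, hCspan, Submodule.map_span]
end

section
/- With notation as in the induced-sequence setup: if {H_s} is a family of subsets of I totally ordered by inclusion such that for each s the restricted sequence (ξ_{H_s}) is a w-split exact sequence induced by (ξ) with respect to F(H_s), and H = ∪_s H_s, then ∪_s F(H_s) = F(H), ∪_s P(H_s) = P(H), ∪_s M(H_s) = M(H), and the sequence 0 → P(H) → F(H) → M(H) → 0 is a w-split exact sequence induced by (ξ) with respect to F(H). -/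
open CategoryTheory

universe u

/-
The submodules `F(Hₛ)` form a chain, so their supremum `F(H)` is their set-theoretic union.
Preimages, intersections and images commute with unions, which gives the statements for `P`
and `M`; and `hₖ(M(H)) ⊆ F(H)` holds because `M(H)` is the union of the `M(Hₛ)`, each of which
`hₖ` maps into `F(Hₛ) ⊆ F(H)`.
-/

theorem Submodule.coe_biSup_sUnion_of_isChain {R F ι : Type*} [Semiring R] [AddCommMonoid F]
    [Module R F] (p : ι → Submodule R F) {S : Set (Set ι)} (hne : S.Nonempty)
    (hchain : IsChain (· ⊆ ·) S) :
    ((⨆ j ∈ ⋃₀ S, p j : Submodule R F) : Set F) =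
      ⋃ Hs ∈ S, ((⨆ j ∈ Hs, p j : Submodule R F) : Set F) := by
  have : Nonempty S := hne.to_subtype
  have hdir : Directed (· ≤ ·) fun Hs : S => ⨆ j ∈ (Hs : Set ι), p j :=
    fun s t => (hchain.total s.2 t.2).elim (fun hst => ⟨t, biSup_mono hst, le_rfl⟩)
      fun hts => ⟨s, le_rfl, biSup_mono hts⟩
  rw [iSup_sUnion, iSup_subtype', Submodule.coe_iSup_of_directed _ hdir, Set.iUnion_subtype]

theorem stmt18_general {R : Type u} [CommRing R] {P F M : Type u}
    [AddCommGroup P] [Module R P] [AddCommGroup F] [Module R F] [AddCommGroup M] [Module R M]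
    (f : P →ₗ[R] F) (g : F →ₗ[R] M)
    {I : Type u} (Fi : I → Submodule R F)
    (n : ℕ)
    (h : Fin n → (M →ₗ[R] F))
    (S : Set (Set I)) (hne : S.Nonempty) (hchain : IsChain (· ⊆ ·) S)
    (hind : ∀ Hs ∈ S,
      ∀ k, Submodule.map (h k) (Submodule.map g (⨆ j ∈ Hs, Fi j)) ≤ ⨆ j ∈ Hs, Fi j) :
    (⋃ Hs ∈ S, ((⨆ j ∈ Hs, Fi j : Submodule R F) : Set F)) =
        ((⨆ j ∈ ⋃₀ S, Fi j : Submodule R F) : Set F) ∧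
    (⋃ Hs ∈ S,
        ((Submodule.comap f (LinearMap.ker g ⊓ ⨆ j ∈ Hs, Fi j) : Submodule R P) : Set P)) =
        ((Submodule.comap f (LinearMap.ker g ⊓ ⨆ j ∈ ⋃₀ S, Fi j) : Submodule R P) : Set P) ∧
    (⋃ Hs ∈ S, ((Submodule.map g (⨆ j ∈ Hs, Fi j) : Submodule R M) : Set M)) =
        ((Submodule.map g (⨆ j ∈ ⋃₀ S, Fi j) : Submodule R M) : Set M) ∧
    (∀ k, Submodule.map (h k) (Submodule.map g (⨆ j ∈ ⋃₀ S, Fi j)) ≤ ⨆ j ∈ ⋃₀ S, Fi j) := by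
  have hF := Submodule.coe_biSup_sUnion_of_isChain Fi hne hchain
  refine ⟨hF.symm, ?_, ?_, fun k => ?_⟩
  · simp only [Submodule.comap_coe, Submodule.coe_inf, hF, Set.inter_iUnion₂,
      Set.preimage_iUnion₂]
  · simp only [Submodule.map_coe, hF, Set.image_iUnion₂]
  · simp only [iSup_sUnion, Submodule.map_iSup]
    exact iSup₂_mono fun Hs hHs => by simpa only [Submodule.map_iSup] using hind Hs hHs k

/-- Unions of induced w-split subsequences: for a chain `{H_s}` of subsets of `I` with each
restricted sequence induced, setting `H = ⋃ H_s` one has `∪ F(H_s) = F(H)`,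
`∪ P(H_s) = P(H)`, `∪ M(H_s) = M(H)`, and the sequence for `H` is again induced. -/
theorem stmt18 {R : Type u} [CommRing R] {P F M : Type u}
    [AddCommGroup P] [Module R P] [AddCommGroup F] [Module R F] [AddCommGroup M] [Module R M]
    (f : P →ₗ[R] F) (g : F →ₗ[R] M)
    (hf : Function.Injective f) (hg : Function.Surjective g)
    (hfg : LinearMap.range f = LinearMap.ker g)
    {I : Type u} (Fi : I → Submodule R F)
    (hindep : iSupIndep Fi) (hsum : iSup Fi = ⊤)
    (n : ℕ) (d : Fin n → R) (hGV : IsGVIdeal R (Ideal.span (Set.range d)))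
    (h : Fin n → (M →ₗ[R] F)) (hsplit : ∀ k, ∀ x : M, g (h k x) = d k • x)
    (S : Set (Set I)) (hne : S.Nonempty) (hchain : IsChain (· ⊆ ·) S)
    (hind : ∀ Hs ∈ S,
      ∀ k, Submodule.map (h k) (Submodule.map g (⨆ j ∈ Hs, Fi j)) ≤ ⨆ j ∈ Hs, Fi j) :
    (⋃ Hs ∈ S, ((⨆ j ∈ Hs, Fi j : Submodule R F) : Set F)) =
        ((⨆ j ∈ ⋃₀ S, Fi j : Submodule R F) : Set F) ∧
    (⋃ Hs ∈ S,
        ((Submodule.comap f (LinearMap.ker g ⊓ ⨆ j ∈ Hs, Fi j) : Submodule R P) : Set P)) =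
        ((Submodule.comap f (LinearMap.ker g ⊓ ⨆ j ∈ ⋃₀ S, Fi j) : Submodule R P) : Set P) ∧
    (⋃ Hs ∈ S, ((Submodule.map g (⨆ j ∈ Hs, Fi j) : Submodule R M) : Set M)) =
        ((Submodule.map g (⨆ j ∈ ⋃₀ S, Fi j) : Submodule R M) : Set M) ∧
    (∀ k, Submodule.map (h k) (Submodule.map g (⨆ j ∈ ⋃₀ S, Fi j)) ≤ ⨆ j ∈ ⋃₀ S, Fi j) :=
  stmt18_general f g Fi n h S hne hchain hind
end
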